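/- arXiv:2007.07585 — 7 statements merged into one kernel-verified Lean document; each statement's English description precedes it below -/
import Mathlib

section
/- For all x, y ∈ S² with −1 < ⟨x,y⟩ < 1, the vector Log_x(y) is tangent at x (i.e. ⟨x, Log_x(y)⟩ = 0), its norm is ‖Log_x(y)‖ = arccos(⟨x,y⟩) ∈ (0,π), and Exp_x(Log_x(y)) = y. That is, the closed-form logarithm of the sphere is a right inverse of the closed-form exponential on non-antipodal, distinct points. -/
open scoped RealInnerProductSpace

noncomputable section
open Classical

/-- The closed-form Riemannian exponential of the unit sphere `S² ⊂ ℝ³`. -/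
def sphExp (x w : EuclideanSpace ℝ (Fin 3)) : EuclideanSpace ℝ (Fin 3) :=
  if w = (0 : EuclideanSpace ℝ (Fin 3)) then x
  else Real.cos ‖w‖ • x + (Real.sin ‖w‖ / ‖w‖) • w

/-- The closed-form Riemannian logarithm of the unit sphere:
`Log_x(y) = arccos(⟨x,y⟩)·(y − ⟨x,y⟩x)/‖y − ⟨x,y⟩x‖`. -/
def sphLog (x y : EuclideanSpace ℝ (Fin 3)) : EuclideanSpace ℝ (Fin 3) :=
  (Real.arccos ⟪x, y⟫ / ‖y - ⟪x, y⟫ • x‖) • (y - ⟪x, y⟫ • x)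

/-- Parallel transport of a tangent vector `v` at `x ∈ S²` along the geodesic `t ↦ Exp_x(tw)`
to time 1: `Π_x^w(v) = ⟨v,ŵ⟩(−sin‖w‖·x + cos‖w‖·ŵ) + (v − ⟨v,ŵ⟩ŵ)` with `ŵ = w/‖w‖`. -/
def sphPar (x w v : EuclideanSpace ℝ (Fin 3)) : EuclideanSpace ℝ (Fin 3) :=
  ⟪v, ‖w‖⁻¹ • w⟫ • ((-Real.sin ‖w‖) • x + Real.cos ‖w‖ • (‖w‖⁻¹ • w))
    + (v - ⟪v, ‖w‖⁻¹ • w⟫ • (‖w‖⁻¹ • w))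

/-- For x, y ∈ S² with −1 < ⟨x,y⟩ < 1, Log_x(y) is tangent at x, has norm
arccos(⟨x,y⟩) ∈ (0,π), and Exp_x(Log_x(y)) = y. -/
theorem sphere_log_right_inverse (x y : EuclideanSpace ℝ (Fin 3))
    (hx : ‖x‖ = 1) (hy : ‖y‖ = 1) (h1 : -1 < ⟪x, y⟫) (h2 : ⟪x, y⟫ < 1) :
    ⟪x, sphLog x y⟫ = 0 ∧ ‖sphLog x y‖ = Real.arccos ⟪x, y⟫ ∧
      0 < Real.arccos ⟪x, y⟫ ∧ Real.arccos ⟪x, y⟫ < Real.pi ∧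
      sphExp x (sphLog x y) = y := by
  have hc1 : (0:ℝ) < 1 - ⟪x, y⟫ ^ 2 := by nlinarith
  have hu2 : ‖y - ⟪x, y⟫ • x‖ ^ 2 = 1 - ⟪x, y⟫ ^ 2 := by
    rw [← real_inner_self_eq_norm_sq]
    simp only [inner_sub_left, inner_sub_right, inner_smul_left, inner_smul_right,
      real_inner_self_eq_norm_sq, hx, hy, real_inner_comm x y]
    ring
  have hun : ‖y - ⟪x, y⟫ • x‖ = Real.sqrt (1 - ⟪x, y⟫ ^ 2) := by
    rw [← hu2]; rw [Real.sqrt_sq (norm_nonneg _)]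
  have hupos : (0:ℝ) < ‖y - ⟪x, y⟫ • x‖ := by
    rw [hun]; exact Real.sqrt_pos.mpr hc1
  have hθpos : 0 < Real.arccos ⟪x, y⟫ := Real.arccos_pos.mpr h2
  have hθlt : Real.arccos ⟪x, y⟫ < Real.pi := by
    rw [Real.arccos]
    have := Real.neg_pi_div_two_lt_arcsin.mpr h1
    linarith
  have hsin : Real.sin (Real.arccos ⟪x, y⟫) = ‖y - ⟪x, y⟫ • x‖ := by
    rw [Real.sin_arccos, hun]
  have hcos : Real.cos (Real.arccos ⟪x, y⟫) = ⟪x, y⟫ := Real.cos_arccos h1.le h2.le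
  have hxu : ⟪x, y - ⟪x, y⟫ • x⟫ = 0 := by
    simp only [inner_sub_right, inner_smul_right, real_inner_self_eq_norm_sq, hx]
    ring
  have hnorm : ‖sphLog x y‖ = Real.arccos ⟪x, y⟫ := by
    rw [sphLog, norm_smul, Real.norm_eq_abs, abs_div, abs_of_nonneg hθpos.le,
      abs_of_nonneg hupos.le, div_mul_cancel₀ _ hupos.ne']
  have hne : sphLog x y ≠ 0 := by
    intro h
    rw [h, norm_zero] at hnorm
    exact hθpos.ne hnorm
  refine ⟨?_, hnorm, hθpos, hθlt, ?_⟩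
  · rw [sphLog, inner_smul_right, hxu, mul_zero]
  · rw [sphExp, if_neg hne, hnorm, hcos, hsin, sphLog, smul_smul]
    have hs : ‖y - ⟪x, y⟫ • x‖ / Real.arccos ⟪x, y⟫ * (Real.arccos ⟪x, y⟫ / ‖y - ⟪x, y⟫ • x‖) = 1 := by
      rw [div_mul_div_comm, mul_comm ‖y - ⟪x, y⟫ • x‖, div_self (mul_pos hθpos hupos).ne']
    rw [hs, one_smul]
    abel
end
end

section
/- For every x ∈ S², every nonzero tangent vector w at x, and all tangent vectors v, v' at x, the parallel transport map satisfies ⟨Π_x^w(v), Π_x^w(v')⟩ = ⟨v, v'⟩ and ⟨Π_x^w(v), Exp_x(w)⟩ = 0. That is, Π_x^w is a linear isometry from the tangent space at x onto the tangent space of S² at the endpoint Exp_x(w) of the geodesic. -/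
open scoped RealInnerProductSpace

noncomputable section
open Classical

/-
With `u = w / ‖w‖` and `θ = ‖w‖`, parallel transport rotates the plane spanned by `x` and `u`
through `θ` and fixes its orthogonal complement. Split a tangent vector as `v = ⟪v, u⟫ • u + r`
with `r ⊥ x, u`; its image is `⟪v, u⟫ • e + r` with `e = -sin θ • x + cos θ • u`. Since `e` is
again a unit vector orthogonal to `r`, inner products are unchanged, and both `e` and `r` are
orthogonal to the endpoint `cos θ • x + sin θ • u`.
-/

open Real

section PlaneRotation

variable {E : Type*} [NormedAddCommGroup E] [InnerProductSpace ℝ E]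

def planeRotate (x u : E) (θ : ℝ) (v : E) : E :=
  ⟪v, u⟫ • ((-sin θ) • x + cos θ • u) + (v - ⟪v, u⟫ • u)

theorem inner_smul_add_smul_add_of_inner_eq_zero {a r r' : E} (ha : ‖a‖ = 1)
    (hr : ⟪a, r⟫ = 0) (hr' : ⟪a, r'⟫ = 0) (s s' : ℝ) :
    ⟪s • a + r, s' • a + r'⟫ = s * s' + ⟪r, r'⟫ := by
  rw [real_inner_comm] at hr
  simp only [inner_add_left, inner_add_right, real_inner_smul_left, real_inner_smul_right,
    real_inner_self_eq_norm_sq, ha, hr, hr']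
  ring

theorem inner_sub_inner_smul_self {u : E} (hu : ‖u‖ = 1) (v : E) : ⟪u, v - ⟪v, u⟫ • u⟫ = 0 := by
  rw [inner_sub_right, real_inner_smul_right, real_inner_self_eq_norm_sq, hu, real_inner_comm]
  ring

theorem inner_sub_inner_smul_of_inner_eq_zero {x u v : E} (hxu : ⟪x, u⟫ = 0) (hxv : ⟪x, v⟫ = 0) :
    ⟪x, v - ⟪v, u⟫ • u⟫ = 0 := by
  rw [inner_sub_right, real_inner_smul_right, hxu, hxv]
  ring

theorem inner_neg_sin_smul_add_cos_smul_eq_zero {x u r : E} (hxr : ⟪x, r⟫ = 0) (hur : ⟪u, r⟫ = 0)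
    (θ : ℝ) : ⟪(-sin θ) • x + cos θ • u, r⟫ = 0 := by
  simp [inner_add_left, real_inner_smul_left, hxr, hur]

variable {x u : E} (hx : ‖x‖ = 1) (hu : ‖u‖ = 1) (hxu : ⟪x, u⟫ = 0)
include hx hu hxu

theorem norm_neg_sin_smul_add_cos_smul (θ : ℝ) : ‖(-sin θ) • x + cos θ • u‖ = 1 := by
  have horth : ⟪(-sin θ) • x, cos θ • u⟫ = 0 := by
    rw [real_inner_smul_left, real_inner_smul_right, hxu, mul_zero, mul_zero]
  refine (mul_self_inj (norm_nonneg _) zero_le_one).1 ?_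
  rw [norm_add_sq_eq_norm_sq_add_norm_sq_real horth, norm_smul, norm_smul, hx, hu, mul_one,
    mul_one, norm_neg, Real.norm_eq_abs, Real.norm_eq_abs, abs_mul_abs_self, abs_mul_abs_self]
  linear_combination sin_sq_add_cos_sq θ

theorem inner_planeRotate_planeRotate {v v' : E} (hxv : ⟪x, v⟫ = 0) (hxv' : ⟪x, v'⟫ = 0)
    (θ : ℝ) : ⟪planeRotate x u θ v, planeRotate x u θ v'⟫ = ⟪v, v'⟫ := by
  have hsplit (φ : ℝ) := inner_smul_add_smul_add_of_inner_eq_zero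
    (norm_neg_sin_smul_add_cos_smul hx hu hxu φ)
    (inner_neg_sin_smul_add_cos_smul_eq_zero (inner_sub_inner_smul_of_inner_eq_zero hxu hxv)
      (inner_sub_inner_smul_self hu v) φ)
    (inner_neg_sin_smul_add_cos_smul_eq_zero (inner_sub_inner_smul_of_inner_eq_zero hxu hxv')
      (inner_sub_inner_smul_self hu v') φ) ⟪v, u⟫ ⟪v', u⟫
  calc ⟪planeRotate x u θ v, planeRotate x u θ v'⟫
      = ⟪v, u⟫ * ⟪v', u⟫ + ⟪v - ⟪v, u⟫ • u, v' - ⟪v', u⟫ • u⟫ := hsplit θ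
    _ = ⟪v, v'⟫ := by
      -- at angle `0` the rotation is the identity
      simpa [planeRotate] using (hsplit 0).symm

theorem inner_planeRotate_cos_smul_add_sin_smul {v : E} (hxv : ⟪x, v⟫ = 0) (θ : ℝ) :
    ⟪planeRotate x u θ v, cos θ • x + sin θ • u⟫ = 0 := by
  have hux : ⟪u, x⟫ = 0 := by rw [real_inner_comm, hxu]
  have hvx : ⟪v, x⟫ = 0 := by rw [real_inner_comm, hxv]
  simp only [planeRotate, inner_add_left, inner_add_right, inner_sub_left, real_inner_smul_left,
    real_inner_smul_right, real_inner_self_eq_norm_sq, hx, hu, hxu, hux, hvx]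
  ring

end PlaneRotation

theorem sphPar_eq_planeRotate (x w v : EuclideanSpace ℝ (Fin 3)) :
    sphPar x w v = planeRotate x (‖w‖⁻¹ • w) ‖w‖ v :=
  rfl

/-- Parallel transport on the sphere preserves inner products of tangent vectors and maps
tangent vectors at x to tangent vectors at the endpoint Exp_x(w) of the geodesic. -/
theorem sphere_parallel_transport_isometry (x w v v' : EuclideanSpace ℝ (Fin 3))
    (hx : ‖x‖ = 1) (hw : ⟪x, w⟫ = 0) (hw0 : w ≠ 0)
    (hv : ⟪x, v⟫ = 0) (hv' : ⟪x, v'⟫ = 0) :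
    ⟪sphPar x w v, sphPar x w v'⟫ = ⟪v, v'⟫ ∧
      ⟪sphPar x w v, sphExp x w⟫ = 0 := by
  have hu : ‖‖w‖⁻¹ • w‖ = 1 := norm_smul_inv_norm hw0
  have hxu : ⟪x, ‖w‖⁻¹ • w⟫ = 0 := by rw [real_inner_smul_right, hw, mul_zero]
  have hexp : sphExp x w = cos ‖w‖ • x + sin ‖w‖ • (‖w‖⁻¹ • w) := by
    rw [sphExp, if_neg hw0, smul_smul, div_eq_mul_inv]
  rw [hexp, sphPar_eq_planeRotate, sphPar_eq_planeRotate]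
  exact ⟨inner_planeRotate_planeRotate hx hu hxu hv hv' ‖w‖,
    inner_planeRotate_cos_smul_add_sin_smul hx hu hxu hv ‖w‖⟩
end
end

section
/- Let x, v, w be an orthonormal triple in ℝ³ (so x ∈ S² and v, w are tangent at x). For s, t > 0 small, define the Schild's ladder construction: b(s,t) := Log_{Exp_x(sv)}(Exp_x(tw)), the midpoint m(s,t) := Exp_{Exp_x(sv)}(b(s,t)/2), a(s,t) := Log_x(m(s,t)), z(s,t) := Exp_x(2·a(s,t)), and the output u(s,t) := Log_{Exp_x(tw)}(z(s,t)). Then there exist δ > 0 and C > 0 such that for all s, t ∈ (0, δ) the construction is well defined and ‖u(s,t) − Π_x^{tw}(s·v + (s²t/2)·w)‖ ≤ C·(s + t)⁴. In other words, on the unit sphere one rung of Schild's ladder transporting sv along tw equals the exact parallel transport of sv plus the curvature correction (s²t/2)·(parallel transport of w), up to an error of total order four in (s,t); this is the constant-curvature instance of the third-order Taylor expansion u = v + ½R(w,v)v + O(4) of Schild's ladder, since R(w,v)v = w for orthonormal v, w on the unit sphere. -/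
open scoped RealInnerProductSpace

noncomputable section
open Classical

/-!
On the unit sphere every step of the ladder has a closed form. The geodesic midpoint of unit
vectors `y₁, y₂` is `(y₁ + y₂)/‖y₁ + y₂‖`, and `Exp_x(2 Log_x m) = 2⟨x,m⟩m - x` is the reflection
of `x` in the axis through `m`. In the frame `x, v, w`, with `p = cos s`, `q = cos t`,
`x_v = Exp_x(sv)` and `x_w = Exp_x(tw)`, this gives `z = B (x_v + x_w) - x` for
`B = (p + q)/(1 + pq)`, hence `⟨x_w, z⟩ = cos s`, and then
`u = s (B v + κ e)` with `κ = sin s sin t/(1 + pq)` and `e = -sin t x + cos t w`, the transport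
of `w`. Since `Π(sv + (s²t/2) w) = sv + (s²t/2) e`, the error is `s (B - 1) v + s (κ - st/2) e`,
and both coefficients are `O((s + t)³)` by `1 - s²/2 ≤ cos s` and `s - s³/6 ≤ sin s ≤ s`.
-/

open Real Set

local notation "ℝ³" => EuclideanSpace ℝ (Fin 3)

section InnerProductSpace

variable {F : Type*} [NormedAddCommGroup F] [InnerProductSpace ℝ F]

theorem norm_sub_cos_smul_of_inner_eq_cos {x y : F} (hx : ‖x‖ = 1) (hy : ‖y‖ = 1) {θ : ℝ}
    (hθ : θ ∈ Icc 0 π) (hxy : ⟪x, y⟫ = cos θ) : ‖y - cos θ • x‖ = sin θ := by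
  refine (sq_eq_sq₀ (norm_nonneg _) (sin_nonneg_of_nonneg_of_le_pi hθ.1 hθ.2)).1 ?_
  rw [norm_sub_sq_real, norm_smul, real_inner_smul_right, real_inner_comm, hxy, hx, hy,
    sin_sq, norm_eq_abs]
  nlinarith [sq_abs (cos θ)]

theorem norm_smul_add_smul_le {v e : F} (hv : ‖v‖ = 1) (he : ‖e‖ = 1) (a b : ℝ) :
    ‖a • v + b • e‖ ≤ |a| + |b| := by
  simpa [norm_smul, hv, he] using norm_add_le (a • v) (b • e)

theorem norm_smul_add_smul_eq_one {x w : F} (hx : ‖x‖ = 1) (hw : ‖w‖ = 1) (hxw : ⟪x, w⟫ = 0)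
    {a b : ℝ} (hab : a ^ 2 + b ^ 2 = 1) : ‖a • x + b • w‖ = 1 := by
  refine (sq_eq_sq₀ (norm_nonneg _) zero_le_one).1 ?_
  rw [norm_add_sq_real, norm_smul, norm_smul, real_inner_smul_left, real_inner_smul_right, hxw,
    hx, hw, norm_eq_abs, norm_eq_abs, mul_pow, mul_pow, sq_abs, sq_abs]
  linear_combination hab

end InnerProductSpace

theorem arccos_mem_Ioo {c : ℝ} (h₁ : -1 < c) (h₂ : c < 1) : arccos c ∈ Ioo 0 π :=
  ⟨arccos_pos.2 h₂, arccos_lt_pi.2 h₁⟩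

theorem cos_mem_Ioo_zero_one {s : ℝ} (hs : s ∈ Ioo 0 (π / 2)) : cos s ∈ Ioo 0 1 :=
  ⟨cos_pos_of_mem_Ioo ⟨by linarith [hs.1, pi_pos], hs.2⟩, by
    simpa using cos_lt_cos_of_nonneg_of_le_pi le_rfl (by linarith [hs.2, pi_pos]) hs.1⟩

theorem sphExp_smul_of_norm_eq_one (x : ℝ³) {e : ℝ³} (he : ‖e‖ = 1) {r : ℝ} (hr : 0 < r) :
    sphExp x (r • e) = cos r • x + sin r • e := by
  have hre : ‖r • e‖ = r := by rw [norm_smul, he, norm_eq_abs, abs_of_pos hr, mul_one]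
  rw [sphExp, if_neg (norm_pos_iff.1 (by rw [hre]; exact hr)), hre, smul_smul,
    div_mul_cancel₀ _ hr.ne']

theorem norm_sphExp {x w : ℝ³} (hx : ‖x‖ = 1) (hxw : ⟪x, w⟫ = 0) : ‖sphExp x w‖ = 1 := by
  by_cases hw : w = 0
  · rwa [sphExp, if_pos hw]
  have hw' : ‖w‖ ≠ 0 := norm_ne_zero_iff.2 hw
  rw [sphExp, if_neg hw]
  refine (sq_eq_sq₀ (norm_nonneg _) zero_le_one).1 ?_
  rw [norm_add_sq_real]
  simp only [norm_smul, real_inner_smul_left, real_inner_smul_right, hxw, hx, mul_pow,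
    norm_eq_abs, sq_abs, div_pow]
  rw [div_mul_cancel₀ _ (pow_ne_zero 2 hw')]
  linear_combination cos_sq_add_sin_sq ‖w‖

theorem inner_sphLog_eq_zero {x : ℝ³} (hx : ‖x‖ = 1) (y : ℝ³) : ⟪x, sphLog x y⟫ = 0 := by
  rw [sphLog, real_inner_smul_right, inner_sub_right, real_inner_smul_right,
    real_inner_self_eq_norm_sq, hx]
  ring

theorem sphLog_of_inner_eq_cos {x y : ℝ³} (hx : ‖x‖ = 1) (hy : ‖y‖ = 1) {θ : ℝ}
    (hθ : θ ∈ Icc 0 π) (hxy : ⟪x, y⟫ = cos θ) :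
    sphLog x y = (θ / sin θ) • (y - cos θ • x) := by
  rw [sphLog, hxy, arccos_cos hθ.1 hθ.2, norm_sub_cos_smul_of_inner_eq_cos hx hy hθ hxy]

theorem sphExp_smul_sphLog {x y : ℝ³} (hx : ‖x‖ = 1) (hy : ‖y‖ = 1) {θ : ℝ}
    (hθ : θ ∈ Ioo 0 π) (hxy : ⟪x, y⟫ = cos θ) {r : ℝ} (hr : 0 < r) :
    sphExp x (r • sphLog x y) = cos (r * θ) • x + (sin (r * θ) / sin θ) • (y - cos θ • x) := by
  have hsin : 0 < sin θ := sin_pos_of_pos_of_lt_pi hθ.1 hθ.2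
  have hnorm := norm_sub_cos_smul_of_inner_eq_cos hx hy (Ioo_subset_Icc_self hθ) hxy
  have he : ‖(sin θ)⁻¹ • (y - cos θ • x)‖ = 1 := by
    rw [norm_smul, hnorm, norm_inv, norm_eq_abs, abs_of_pos hsin, inv_mul_cancel₀ hsin.ne']
  have hlog : r • sphLog x y = (r * θ) • (sin θ)⁻¹ • (y - cos θ • x) := by
    rw [sphLog_of_inner_eq_cos hx hy (Ioo_subset_Icc_self hθ) hxy, smul_smul, smul_smul]
    ring_nf
  rw [hlog, sphExp_smul_of_norm_eq_one x he (mul_pos hr hθ.1), smul_smul, div_eq_mul_inv]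

theorem sphExp_two_smul_sphLog {x y : ℝ³} (hx : ‖x‖ = 1) (hy : ‖y‖ = 1)
    (h₁ : -1 < ⟪x, y⟫) (h₂ : ⟪x, y⟫ < 1) :
    sphExp x ((2 : ℝ) • sphLog x y) = (2 * ⟪x, y⟫) • y - x := by
  have hθ := arccos_mem_Ioo h₁ h₂
  have hcos : cos (arccos ⟪x, y⟫) = ⟪x, y⟫ := cos_arccos h₁.le h₂.le
  have hsin : sin (arccos ⟪x, y⟫) ≠ 0 := (sin_pos_of_pos_of_lt_pi hθ.1 hθ.2).ne'
  rw [sphExp_smul_sphLog hx hy hθ hcos.symm two_pos, cos_two_mul, sin_two_mul, hcos]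
  match_scalars <;> field_simp
  ring

theorem sphExp_half_smul_sphLog {x y : ℝ³} (hx : ‖x‖ = 1) (hy : ‖y‖ = 1)
    (h₁ : -1 < ⟪x, y⟫) (h₂ : ⟪x, y⟫ < 1) :
    sphExp x ((1 / 2 : ℝ) • sphLog x y) = ‖x + y‖⁻¹ • (x + y) := by
  set α := arccos ⟪x, y⟫ / 2 with hα
  have hθ := arccos_mem_Ioo h₁ h₂
  have hcos : cos (2 * α) = ⟪x, y⟫ := by
    rw [hα, mul_div_cancel₀ _ two_ne_zero, cos_arccos h₁.le h₂.le]
  have hcα : 0 < cos α := cos_pos_of_mem_Ioo ⟨by linarith [pi_pos, hθ.1], by linarith [hθ.2]⟩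
  have hsα : 0 < sin α := sin_pos_of_pos_of_lt_pi (by linarith [hθ.1]) (by linarith [hθ.2, pi_pos])
  have hnorm : ‖x + y‖ = 2 * cos α := by
    refine (sq_eq_sq₀ (norm_nonneg _) (by positivity)).1 ?_
    rw [norm_add_sq_real, hx, hy, ← hcos, cos_two_mul]
    ring
  rw [show arccos ⟪x, y⟫ = 2 * α by rw [hα]; ring] at hθ
  rw [sphExp_smul_sphLog hx hy hθ hcos.symm one_half_pos, hnorm, cos_two_mul,
    sin_two_mul, show 1 / 2 * (2 * α) = α by ring]
  match_scalars <;> field_simp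
  ring

theorem sphExp_two_smul_sphLog_midpoint {x y₁ y₂ : ℝ³} (hx : ‖x‖ = 1) (hy₁ : ‖y₁‖ = 1)
    (hy₂ : ‖y₂‖ = 1) (h₁ : -1 < ⟪y₁, y₂⟫) (h₂ : ⟪y₁, y₂⟫ < 1)
    (hS : |⟪x, y₁ + y₂⟫| < ‖y₁ + y₂‖) :
    let m := sphExp y₁ ((1 / 2 : ℝ) • sphLog y₁ y₂)
    (-1 < ⟪x, m⟫ ∧ ⟪x, m⟫ < 1) ∧
      sphExp x ((2 : ℝ) • sphLog x m) = (2 * ⟪x, y₁ + y₂⟫ / ‖y₁ + y₂‖ ^ 2) • (y₁ + y₂) - x := by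
  intro m
  have hN : 0 < ‖y₁ + y₂‖ := (abs_nonneg _).trans_lt hS
  have hm : m = ‖y₁ + y₂‖⁻¹ • (y₁ + y₂) := sphExp_half_smul_sphLog hy₁ hy₂ h₁ h₂
  have hxm : ⟪x, m⟫ = ⟪x, y₁ + y₂⟫ / ‖y₁ + y₂‖ := by
    rw [hm, real_inner_smul_right, inv_mul_eq_div]
  have hxm_mem : -1 < ⟪x, m⟫ ∧ ⟪x, m⟫ < 1 := by
    rw [hxm, ← abs_lt, abs_div, abs_of_pos hN, div_lt_one hN]
    exact hS
  have hm_norm : ‖m‖ = 1 := by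
    rw [hm, norm_smul, norm_inv, norm_norm, inv_mul_cancel₀ hN.ne']
  refine ⟨hxm_mem, ?_⟩
  rw [sphExp_two_smul_sphLog hx hm_norm hxm_mem.1 hxm_mem.2, hxm, hm, smul_smul]
  congr 2
  field_simp

theorem sphPar_smul_add_smul (x : ℝ³) {v w : ℝ³} (hw : ‖w‖ = 1) (hvw : ⟪v, w⟫ = 0) {t : ℝ}
    (ht : 0 < t) (a b : ℝ) :
    sphPar x (t • w) (a • v + b • w) = a • v + b • ((-sin t) • x + cos t • w) := by
  have htw : ‖t • w‖ = t := by rw [norm_smul, hw, norm_eq_abs, abs_of_pos ht, mul_one]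
  rw [sphPar, htw, smul_smul, inv_mul_cancel₀ ht.ne', one_smul, inner_add_left,
    real_inner_smul_left, real_inner_smul_left, hvw, real_inner_self_eq_norm_sq, hw]
  module

theorem inner_sphExp_smul {x v : ℝ³} (hx : ‖x‖ = 1) (hv : ‖v‖ = 1) (hxv : ⟪x, v⟫ = 0)
    {s : ℝ} (hs : 0 < s) : ⟪x, sphExp x (s • v)⟫ = cos s := by
  rw [sphExp_smul_of_norm_eq_one x hv hs, inner_add_right, real_inner_smul_right,
    real_inner_smul_right, hxv, real_inner_self_eq_norm_sq, hx]
  ring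

theorem inner_sphExp_smul_sphExp_smul {x v w : ℝ³} (hx : ‖x‖ = 1) (hv : ‖v‖ = 1)
    (hw : ‖w‖ = 1) (hxv : ⟪x, v⟫ = 0) (hxw : ⟪x, w⟫ = 0) (hvw : ⟪v, w⟫ = 0) {s t : ℝ}
    (hs : 0 < s) (ht : 0 < t) : ⟪sphExp x (s • v), sphExp x (t • w)⟫ = cos s * cos t := by
  rw [sphExp_smul_of_norm_eq_one x hv hs, sphExp_smul_of_norm_eq_one x hw ht]
  simp only [inner_add_left, inner_add_right, real_inner_smul_left, real_inner_smul_right,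
    real_inner_self_eq_norm_sq, hx, hxw, hvw, real_inner_comm x v, hxv]
  ring

theorem schild_reflection_eq {x v w : ℝ³} (hx : ‖x‖ = 1) (hv : ‖v‖ = 1) (hw : ‖w‖ = 1)
    (hxv : ⟪x, v⟫ = 0) (hxw : ⟪x, w⟫ = 0) (hvw : ⟪v, w⟫ = 0) {s t : ℝ}
    (hs : s ∈ Ioo 0 (π / 2)) (ht : t ∈ Ioo 0 (π / 2)) :
    let xv := sphExp x (s • v)
    let xw := sphExp x (t • w)
    let m := sphExp xv ((1 / 2 : ℝ) • sphLog xv xw)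
    (-1 < ⟪xv, xw⟫ ∧ ⟪xv, xw⟫ < 1) ∧ (-1 < ⟪x, m⟫ ∧ ⟪x, m⟫ < 1) ∧
      sphExp x ((2 : ℝ) • sphLog x m)
        = ((cos s + cos t) / (1 + cos s * cos t)) • (xv + xw) - x := by
  intro xv xw m
  obtain ⟨hp0, hp1⟩ := cos_mem_Ioo_zero_one hs
  obtain ⟨hq0, hq1⟩ := cos_mem_Ioo_zero_one ht
  have hxv_norm : ‖xv‖ = 1 := norm_sphExp hx (by rw [real_inner_smul_right, hxv, mul_zero])
  have hxw_norm : ‖xw‖ = 1 := norm_sphExp hx (by rw [real_inner_smul_right, hxw, mul_zero])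
  have hxv_xw : ⟪xv, xw⟫ = cos s * cos t :=
    inner_sphExp_smul_sphExp_smul hx hv hw hxv hxw hvw hs.1 ht.1
  have hx_sum : ⟪x, xv + xw⟫ = cos s + cos t := by
    rw [inner_add_right, inner_sphExp_smul hx hv hxv hs.1, inner_sphExp_smul hx hw hxw ht.1]
  have hsum_norm : ‖xv + xw‖ ^ 2 = 2 * (1 + cos s * cos t) := by
    rw [norm_add_sq_real, hxv_norm, hxw_norm, hxv_xw]
    ring
  have hpq : -1 < ⟪xv, xw⟫ ∧ ⟪xv, xw⟫ < 1 := by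
    rw [hxv_xw]
    constructor <;> nlinarith
  have hS : |⟪x, xv + xw⟫| < ‖xv + xw‖ := by
    refine abs_lt_of_sq_lt_sq ?_ (norm_nonneg _)
    rw [hx_sum, hsum_norm]
    nlinarith
  obtain ⟨hm, hz⟩ := sphExp_two_smul_sphLog_midpoint hx hxv_norm hxw_norm hpq.1 hpq.2 hS
  refine ⟨hpq, hm, ?_⟩
  rw [hz, hx_sum, hsum_norm]
  congr 2
  field_simp

theorem schild_rung_eq {x v w : ℝ³} (hx : ‖x‖ = 1) (hv : ‖v‖ = 1) (hw : ‖w‖ = 1)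
    (hxv : ⟪x, v⟫ = 0) (hxw : ⟪x, w⟫ = 0) (hvw : ⟪v, w⟫ = 0) {s t : ℝ}
    (hs : s ∈ Ioo 0 (π / 2)) (ht : t ∈ Ioo 0 (π / 2)) :
    let xv := sphExp x (s • v)
    let xw := sphExp x (t • w)
    let m := sphExp xv ((1 / 2 : ℝ) • sphLog xv xw)
    let z := sphExp x ((2 : ℝ) • sphLog x m)
    ((-1 < ⟪xv, xw⟫ ∧ ⟪xv, xw⟫ < 1) ∧ (-1 < ⟪x, m⟫ ∧ ⟪x, m⟫ < 1) ∧
        (-1 < ⟪xw, z⟫ ∧ ⟪xw, z⟫ < 1)) ∧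
      sphLog xw z = s • (((cos s + cos t) / (1 + cos s * cos t)) • v
        + (sin s * sin t / (1 + cos s * cos t)) • ((-sin t) • x + cos t • w)) := by
  intro xv xw m z
  obtain ⟨hpq, hm, hz⟩ := schild_reflection_eq hx hv hw hxv hxw hvw hs ht
  change z = ((cos s + cos t) / (1 + cos s * cos t)) • (xv + xw) - x at hz
  obtain ⟨hp0, hp1⟩ := cos_mem_Ioo_zero_one hs
  have hσ : 0 < sin s := sin_pos_of_pos_of_lt_pi hs.1 (by linarith [hs.2, pi_pos])
  have hR : 0 < 1 + cos s * cos t := by nlinarith [(cos_mem_Ioo_zero_one ht).1]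
  have hxw_norm : ‖xw‖ = 1 := norm_sphExp hx (by rw [real_inner_smul_right, hxw, mul_zero])
  have hz_norm : ‖z‖ = 1 :=
    norm_sphExp hx (by rw [real_inner_smul_right, inner_sphLog_eq_zero hx, mul_zero])
  have hxw_z : ⟪xw, z⟫ = cos s := by
    rw [hz, inner_sub_right, real_inner_smul_right, inner_add_right, real_inner_comm xv,
      inner_sphExp_smul_sphExp_smul hx hv hw hxv hxw hvw hs.1 ht.1,
      real_inner_self_eq_norm_sq, hxw_norm, real_inner_comm, inner_sphExp_smul hx hw hxw ht.1]
    field_simp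
    ring
  have hu : sphLog xw z = (s / sin s) • (z - cos s • xw) :=
    sphLog_of_inner_eq_cos hxw_norm hz_norm ⟨hs.1.le, by linarith [hs.2, pi_pos]⟩ hxw_z
  refine ⟨⟨hpq, hm, by rw [hxw_z]; linarith, by rw [hxw_z]; exact hp1⟩, ?_⟩
  have hxv_eq : xv = cos s • x + sin s • v := sphExp_smul_of_norm_eq_one x hv hs.1
  have hxw_eq : xw = cos t • x + sin t • w := sphExp_smul_of_norm_eq_one x hw ht.1
  rw [hu, hz, hxv_eq, hxw_eq]
  match_scalars <;> field_simp
  · linear_combination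
      s * (sin t ^ 2 * sin_sq_add_cos_sq s + (1 - cos s ^ 2) * sin_sq_add_cos_sq t)
  · linear_combination -(s * sin t * cos t) * sin_sq_add_cos_sq s

theorem abs_cos_add_cos_div_sub_one_le {s t : ℝ} (hs : s ∈ Ioo 0 (π / 2))
    (ht : t ∈ Ioo 0 (π / 2)) :
    |(cos s + cos t) / (1 + cos s * cos t) - 1| ≤ s ^ 2 * t ^ 2 / 4 := by
  obtain ⟨hp0, hp1⟩ := cos_mem_Ioo_zero_one hs
  obtain ⟨hq0, hq1⟩ := cos_mem_Ioo_zero_one ht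
  have hR : 1 ≤ 1 + cos s * cos t := by nlinarith
  have hfactor : (cos s + cos t) / (1 + cos s * cos t) - 1
      = -((1 - cos s) * (1 - cos t) / (1 + cos s * cos t)) := by
    field_simp
    ring
  have hnum : (1 - cos s) * (1 - cos t) ≤ s ^ 2 / 2 * (t ^ 2 / 2) :=
    mul_le_mul (by linarith [one_sub_sq_div_two_le_cos (x := s)])
      (by linarith [one_sub_sq_div_two_le_cos (x := t)]) (by linarith) (by positivity)
  rw [hfactor, abs_neg, abs_of_nonneg (by apply div_nonneg <;> nlinarith)]
  calc (1 - cos s) * (1 - cos t) / (1 + cos s * cos t) ≤ (1 - cos s) * (1 - cos t) :=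
        div_le_self (by nlinarith) hR
    _ ≤ s ^ 2 * t ^ 2 / 4 := by linarith

theorem sub_cube_div_six_nonneg {s : ℝ} (hs : s ∈ Ioo 0 (π / 2)) : 0 ≤ s - s ^ 3 / 6 := by
  have hs2 : s ^ 2 < 6 := by nlinarith [hs.1, hs.2, pi_lt_four]
  nlinarith [mul_pos hs.1 (sub_pos.2 hs2)]

theorem abs_sin_mul_sin_div_sub_le {s t : ℝ} (hs : s ∈ Ioo 0 (π / 2))
    (ht : t ∈ Ioo 0 (π / 2)) :
    |sin s * sin t / (1 + cos s * cos t) - s * t / 2| ≤ s * t * (s ^ 2 + t ^ 2) / 4 := by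
  obtain ⟨hp0, hp1⟩ := cos_mem_Ioo_zero_one hs
  obtain ⟨hq0, hq1⟩ := cos_mem_Ioo_zero_one ht
  have hσ : s - s ^ 3 / 6 ≤ sin s := (sin_gt_sub_cube hs.1).le
  have hτ : t - t ^ 3 / 6 ≤ sin t := (sin_gt_sub_cube ht.1).le
  have hσ0 : 0 ≤ s - s ^ 3 / 6 := sub_cube_div_six_nonneg hs
  have hτ0 : 0 ≤ t - t ^ 3 / 6 := sub_cube_div_six_nonneg ht
  have hst : 0 < s * t := mul_pos hs.1 ht.1
  have hsin_le : sin s * sin t ≤ s * t :=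
    mul_le_mul (sin_le hs.1.le) (sin_le ht.1.le) (hτ0.trans hτ) hs.1.le
  have hsin_ge : s * t - s * t * (s ^ 2 + t ^ 2) / 6 ≤ sin s * sin t := by
    nlinarith [mul_le_mul hσ hτ hτ0 (hσ0.trans hσ), mul_pos hst (mul_pos hs.1 ht.1)]
  have hcos_ge : 1 - (s ^ 2 + t ^ 2) / 2 ≤ cos s * cos t := by
    nlinarith [one_sub_sq_div_two_le_cos (x := s), one_sub_sq_div_two_le_cos (x := t)]
  have hR : 0 < 2 * (1 + cos s * cos t) := by positivity
  have hnum :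
      |2 * (sin s * sin t) - s * t * (1 + cos s * cos t)| ≤ s * t * (s ^ 2 + t ^ 2) / 2 := by
    rw [abs_le]
    constructor <;> nlinarith [mul_le_mul_of_nonneg_left hcos_ge hst.le,
      mul_le_mul_of_nonneg_left (mul_le_one₀ hp1.le hq0.le hq1.le) hst.le]
  rw [show sin s * sin t / (1 + cos s * cos t) - s * t / 2
      = (2 * (sin s * sin t) - s * t * (1 + cos s * cos t)) / (2 * (1 + cos s * cos t)) by
    field_simp, abs_div, abs_of_pos hR, div_le_iff₀ hR]
  nlinarith [abs_nonneg (2 * (sin s * sin t) - s * t * (1 + cos s * cos t)), mul_pos hp0 hq0]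

theorem schild_error_le_pow_four {s t : ℝ} (hs : 0 < s) (ht : 0 < t) (hst : s + t ≤ 1) :
    s * (s ^ 2 * t ^ 2 / 4) + s * (s * t * (s ^ 2 + t ^ 2) / 4) ≤ (s + t) ^ 4 := by
  have h₁ : s ^ 2 * t ≤ (s + t) ^ 3 := by nlinarith [mul_pos hs ht, mul_pos (mul_pos hs ht) ht]
  have h₂ : s * t + s ^ 2 + t ^ 2 ≤ (s + t) ^ 2 := by nlinarith [mul_pos hs ht]
  have h₃ : (s + t) ^ 5 ≤ (s + t) ^ 4 := pow_le_pow_of_le_one (by positivity) hst (by norm_num)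
  calc s * (s ^ 2 * t ^ 2 / 4) + s * (s * t * (s ^ 2 + t ^ 2) / 4)
      = s ^ 2 * t * (s * t + s ^ 2 + t ^ 2) / 4 := by ring
    _ ≤ (s + t) ^ 3 * (s + t) ^ 2 / 4 := by gcongr
    _ ≤ (s + t) ^ 4 := by nlinarith [pow_pos (add_pos hs ht) 4]

/-- One rung of Schild's ladder on the unit sphere, transporting `sv` along `tw` for an
orthonormal triple `x, v, w`: for `s, t > 0` small enough the construction is well defined
(all logarithms are taken at non-antipodal distinct points) and its output `u(s,t)` equals the
exact parallel transport `Π_x^{tw}(s·v + (s²t/2)·w)` — the transport of `sv` plus the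
curvature correction `(s²t/2)·w`, since `R(w,v)v = w` here — up to an error of total order
four in `(s,t)`.  This is the constant-curvature instance of the third-order expansion
`u = v + ½R(w,v)v + O(4)` of Schild's ladder. -/
theorem schild_ladder_sphere_taylor (x v w : EuclideanSpace ℝ (Fin 3))
    (hx : ‖x‖ = 1) (hv : ‖v‖ = 1) (hw : ‖w‖ = 1)
    (hxv : ⟪x, v⟫ = 0) (hxw : ⟪x, w⟫ = 0) (hvw : ⟪v, w⟫ = 0) :
    ∃ δ > (0 : ℝ), ∃ C > (0 : ℝ), ∀ s t : ℝ, 0 < s → s < δ → 0 < t → t < δ →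
      let xv := sphExp x (s • v)
      let xw := sphExp x (t • w)
      let b := sphLog xv xw
      let m := sphExp xv ((1 / 2 : ℝ) • b)
      let a := sphLog x m
      let z := sphExp x ((2 : ℝ) • a)
      let u := sphLog xw z
      ((-1 < ⟪xv, xw⟫ ∧ ⟪xv, xw⟫ < 1) ∧
        (-1 < ⟪x, m⟫ ∧ ⟪x, m⟫ < 1) ∧
        (-1 < ⟪xw, z⟫ ∧ ⟪xw, z⟫ < 1)) ∧
      ‖u - sphPar x (t • w) (s • v + ((s ^ 2 * t) / 2) • w)‖ ≤ C * (s + t) ^ 4 := by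
  refine ⟨1 / 2, by norm_num, 1, one_pos, fun s t hs hsδ ht htδ => ?_⟩
  have hδ : (1 / 2 : ℝ) < π / 2 := by linarith [pi_gt_three]
  have hs' : s ∈ Ioo 0 (π / 2) := ⟨hs, hsδ.trans hδ⟩
  have ht' : t ∈ Ioo 0 (π / 2) := ⟨ht, htδ.trans hδ⟩
  obtain ⟨hdef, hu⟩ := schild_rung_eq hx hv hw hxv hxw hvw hs' ht'
  refine ⟨hdef, ?_⟩
  have he : ‖(-sin t) • x + cos t • w‖ = 1 :=
    norm_smul_add_smul_eq_one hx hw hxw (by rw [neg_sq, sin_sq_add_cos_sq])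
  calc ‖sphLog (sphExp x (t • w)) _ - sphPar x (t • w) (s • v + (s ^ 2 * t / 2) • w)‖
      = ‖(s * ((cos s + cos t) / (1 + cos s * cos t) - 1)) • v
          + (s * (sin s * sin t / (1 + cos s * cos t) - s * t / 2))
            • ((-sin t) • x + cos t • w)‖ := by
        rw [hu, sphPar_smul_add_smul x hw hvw ht]
        congr 1
        module
    _ ≤ s * (s ^ 2 * t ^ 2 / 4) + s * (s * t * (s ^ 2 + t ^ 2) / 4) := by
        refine (norm_smul_add_smul_le hv he _ _).trans ?_
        rw [abs_mul, abs_mul, abs_of_pos hs]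
        gcongr
        exacts [abs_cos_add_cos_div_sub_one_le hs' ht', abs_sin_mul_sin_div_sub_le hs' ht']
    _ ≤ 1 * (s + t) ^ 4 := by
        rw [one_mul]
        exact schild_error_le_pow_four hs ht (by linarith)
end
end

section
/- For all Σ, Λ ∈ SPD(n), there exists a unique L ∈ Sym(n) such that exp(L) = Σ^{−1/2} Λ Σ^{−1/2}; moreover, setting Log_Σ(Λ) := Σ^{1/2} L Σ^{1/2}, one has Log_Σ(Λ) ∈ Sym(n) and Exp_Σ(Log_Σ(Λ)) = Λ. That is, the affine-invariant logarithm is well defined on all of SPD(n) and is a right inverse of the affine-invariant exponential. -/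
/-!
`S⁻¹ Λ S⁻¹` is positive definite as a congruence of `Λ`, so the continuous functional calculus
provides the symmetric logarithm `L = log (S⁻¹ Λ S⁻¹)` with `exp L = S⁻¹ Λ S⁻¹`. Uniqueness holds
because `log (exp L) = L` for every self-adjoint `L`, since `log ∘ exp = id` on the real spectrum.
The right-inverse property is then the cancellation `S (S⁻¹ X S⁻¹) S = X`.
-/

open Matrix

namespace Matrix

variable {ι α : Type*}

theorem isSelfAdjoint_iff_isSymm [Star α] [TrivialStar α] {A : Matrix ι ι α} :
    IsSelfAdjoint A ↔ A.IsSymm := by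
  rw [isSelfAdjoint_iff, star_eq_conjTranspose, conjTranspose_eq_transpose_of_trivial, IsSymm]

variable [Fintype ι]

theorem IsSymm.mul_mul_same [CommSemiring α] {L S : Matrix ι ι α} (hL : L.IsSymm)
    (hS : S.IsSymm) : (S * L * S).IsSymm := by
  simp [IsSymm, transpose_mul, hL.eq, hS.eq, Matrix.mul_assoc]

variable [DecidableEq ι]

theorem mul_inv_mul_mul_inv_mul [CommRing α] {S : Matrix ι ι α} (hS : IsUnit S)
    (X : Matrix ι ι α) : S * (S⁻¹ * X * S⁻¹) * S = X := by
  have hdet := (isUnit_iff_isUnit_det S).mp hS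
  simp [← Matrix.mul_assoc, mul_nonsing_inv _ hdet, Matrix.mul_assoc _ S⁻¹ S,
    nonsing_inv_mul _ hdet]

theorem PosDef.inv_mul_mul_inv {A S : Matrix ι ι ℝ} (hA : A.PosDef) (hS : S.PosDef) :
    (S⁻¹ * A * S⁻¹).PosDef := by
  have := (IsUnit.posDef_star_left_conjugate_iff hS.inv.isUnit).mpr hA
  rwa [star_eq_conjTranspose, hS.inv.isHermitian.eq] at this

open scoped Matrix.Norms.L2Operator MatrixOrder in
theorem PosDef.existsUnique_isSymm_exp_eq {A : Matrix ι ι ℝ} (hA : A.PosDef) :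
    ∃! L : Matrix ι ι ℝ, L.IsSymm ∧ NormedSpace.exp L = A := by
  refine ⟨CFC.log A, ⟨isSelfAdjoint_iff_isSymm.mp .log, CFC.exp_log A hA.isStrictlyPositive⟩, ?_⟩
  rintro L ⟨hL, rfl⟩
  exact (CFC.log_exp L (isSelfAdjoint_iff_isSymm.mpr hL)).symm

end Matrix

theorem spd_log_exists_unique_and_right_inverse_general (n : ℕ)
    (Lm S : Matrix (Fin n) (Fin n) ℝ)
    (hLm : Lm.PosDef) (hS : S.PosDef) :
    (∃! L : Matrix (Fin n) (Fin n) ℝ,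
        L.IsSymm ∧ NormedSpace.exp L = S⁻¹ * Lm * S⁻¹) ∧
      ∀ L : Matrix (Fin n) (Fin n) ℝ,
        L.IsSymm → NormedSpace.exp L = S⁻¹ * Lm * S⁻¹ →
          (S * L * S).IsSymm ∧
            S * NormedSpace.exp (S⁻¹ * (S * L * S) * S⁻¹) * S = Lm := by
  have hSsymm : S.IsSymm := isSelfAdjoint_iff_isSymm.mp hS.isHermitian
  refine ⟨(hLm.inv_mul_mul_inv hS).existsUnique_isSymm_exp_eq, fun L hL hexp => ?_⟩
  have hmid : S⁻¹ * (S * L * S) * S⁻¹ = L := by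
    simpa [nonsing_inv_nonsing_inv S hS.det_pos.ne'.isUnit] using mul_inv_mul_mul_inv_mul hS.inv.isUnit L
  exact ⟨hL.mul_mul_same hSsymm, by rw [hmid, hexp, mul_inv_mul_mul_inv_mul hS.isUnit]⟩

/-- For `Σ, Λ ∈ SPD(n)` with `S` the positive-definite square root of `Σ`, there is a unique
symmetric `L` with `exp(L) = Σ^{−1/2} Λ Σ^{−1/2} = S⁻¹ Λ S⁻¹`; moreover for any such `L`,
`Log_Σ(Λ) := Σ^{1/2} L Σ^{1/2} = S L S` is symmetric and `Exp_Σ(Log_Σ(Λ)) = Λ`: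
the affine-invariant logarithm is well defined on all of `SPD(n)` and is a right inverse of
the affine-invariant exponential. -/
theorem spd_log_exists_unique_and_right_inverse (n : ℕ) (hn : 1 ≤ n)
    (Sg Lm S : Matrix (Fin n) (Fin n) ℝ)
    (hSg : Sg.PosDef) (hLm : Lm.PosDef) (hS : S.PosDef) (hSS : S * S = Sg) :
    (∃! L : Matrix (Fin n) (Fin n) ℝ,
        L.IsSymm ∧ NormedSpace.exp L = S⁻¹ * Lm * S⁻¹) ∧
      ∀ L : Matrix (Fin n) (Fin n) ℝ,
        L.IsSymm → NormedSpace.exp L = S⁻¹ * Lm * S⁻¹ →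
          (S * L * S).IsSymm ∧
            S * NormedSpace.exp (S⁻¹ * (S * L * S) * S⁻¹) * S = Lm :=
  spd_log_exists_unique_and_right_inverse_general n Lm S hLm hS
end

section
/- For every Σ ∈ SPD(n) and every W ∈ Sym(n), the curve γ(t) := Exp_Σ(tW) satisfies: γ(t) ∈ SPD(n) (in particular γ(t) is invertible) for all t ∈ ℝ, γ is twice differentiable (entrywise) with γ(0) = Σ and γ'(0) = W, and γ''(t) = γ'(t)·γ(t)⁻¹·γ'(t) for all t ∈ ℝ. This is the geodesic equation of the affine-invariant metric, so t ↦ Exp_Σ(tW) is the affine-invariant geodesic from Σ with initial velocity W. -/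
/-!
With `A = S⁻¹ W S⁻¹` the curve is `γ t = S exp(tA) S`, a congruence of
`exp(tA) = exp(tA/2)ᴴ exp(tA/2)`, hence positive definite. Differentiating gives
`γ' = S exp(tA) A S` and `γ'' = S exp(tA) A² S`, and in `γ' γ⁻¹ γ'` the middle factors
`S S⁻¹` and `exp(tA)⁻¹ exp(tA)` cancel, leaving `γ''`.
-/

open Matrix

open scoped ComplexOrder

namespace Matrix

variable {𝕜 ι : Type*} [RCLike 𝕜] [Fintype ι] [DecidableEq ι]

theorem IsHermitian.posDef_exp {A : Matrix ι ι 𝕜} (hA : A.IsHermitian) :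
    (NormedSpace.exp A).PosDef := by
  set B := NormedSpace.exp ((2⁻¹ : ℝ) • A)
  have hB : B.IsHermitian := (hA.smul (IsSelfAdjoint.all _)).exp
  have hsq : NormedSpace.exp A = Bᴴ * B := by
    rw [hB.eq, ← exp_add_of_commute _ _ (Commute.refl _), ← add_smul]
    norm_num
  rw [hsq]
  exact PosDef.conjTranspose_mul_self _ (mulVec_injective_of_isUnit (isUnit_exp _))

section

attribute [local instance] Matrix.linftyOpNormedRing Matrix.linftyOpNormedAlgebra

theorem hasDerivAt_mul_exp_smul_mul_apply (P A Q : Matrix ι ι 𝕜) (t : 𝕜) (i j : ι) :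
    HasDerivAt (fun u : 𝕜 => (P * NormedSpace.exp (u • A) * Q) i j)
      ((P * NormedSpace.exp (t • A) * A * Q) i j) t := by
  have h := ((hasDerivAt_exp_smul_const A t).const_mul P).mul_const Q
  rw [← mul_assoc] at h
  exact (entryLinearMap 𝕜 𝕜 i j).toContinuousLinearMap.hasFDerivAt.comp_hasDerivAt t h

end

theorem conj_mul_inv_conj_mul_conj {R : Type*} [CommRing R] {S E : Matrix ι ι R} (hS : IsUnit S)
    (hE : IsUnit E) (X Y : Matrix ι ι R) :
    S * E * (X * S) * (S * E * S)⁻¹ * (S * E * (Y * S)) = S * E * X * (Y * S) := by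
  rw [isUnit_iff_isUnit_det] at hS hE
  simp only [mul_inv_rev, mul_assoc, mul_nonsing_inv_cancel_left _ _ hS,
    nonsing_inv_mul_cancel_left _ _ hS, nonsing_inv_mul_cancel_left _ _ hE]

end Matrix

theorem spd_geodesic_general (n : ℕ) (Sg W S : Matrix (Fin n) (Fin n) ℝ)
    (hW : W.IsSymm) (hS : S.PosDef) (hSS : S * S = Sg)
    (γ : ℝ → Matrix (Fin n) (Fin n) ℝ)
    (hγ : ∀ t : ℝ, γ t = S * NormedSpace.exp (S⁻¹ * (t • W) * S⁻¹) * S) :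
    (∀ t : ℝ, (γ t).PosDef) ∧ (∀ t : ℝ, IsUnit (γ t)) ∧ γ 0 = Sg ∧
      ∃ γ' γ'' : ℝ → Matrix (Fin n) (Fin n) ℝ,
        (∀ (t : ℝ) (i j : Fin n), HasDerivAt (fun s : ℝ => γ s i j) (γ' t i j) t) ∧
        (∀ (t : ℝ) (i j : Fin n), HasDerivAt (fun s : ℝ => γ' s i j) (γ'' t i j) t) ∧
        γ' 0 = W ∧
        ∀ t : ℝ, γ'' t = γ' t * (γ t)⁻¹ * γ' t := by
  have hSH : S.IsHermitian := hS.isHermitian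
  have hdet : IsUnit S.det := (isUnit_iff_isUnit_det S).1 hS.isUnit
  set A := S⁻¹ * W * S⁻¹
  have hAH : A.IsHermitian := by
    have h := isHermitian_conjTranspose_mul_mul S⁻¹ (isHermitian_iff_isSymm.2 hW)
    rwa [hSH.inv.eq] at h
  have hγA : ∀ t, γ t = S * NormedSpace.exp (t • A) * S := fun t => by
    rw [hγ, Matrix.mul_smul, Matrix.smul_mul]
  have hpos : ∀ t, (γ t).PosDef := fun t => by
    have h := (hAH.smul (IsSelfAdjoint.all t)).posDef_exp.conjTranspose_mul_mul_same
      (mulVec_injective_of_isUnit hS.isUnit)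
    rwa [hSH.eq, ← hγA] at h
  refine ⟨hpos, fun t => (hpos t).isUnit, by simp [hγA, hSS],
    fun t => S * NormedSpace.exp (t • A) * (A * S),
    fun t => S * NormedSpace.exp (t • A) * A * (A * S), fun t i j => ?_, fun t i j => ?_, ?_,
    fun t => ?_⟩
  · simpa only [hγA, mul_assoc] using hasDerivAt_mul_exp_smul_mul_apply S A S t i j
  · exact hasDerivAt_mul_exp_smul_mul_apply S A (A * S) t i j
  · simp [A, mul_assoc, mul_nonsing_inv_cancel_left _ _ hdet,
      nonsing_inv_mul_cancel_right _ _ hdet]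
  · rw [hγA, conj_mul_inv_conj_mul_conj hS.isUnit (isUnit_exp _)]

/-- The curve `γ(t) = Exp_Σ(tW) = S · exp(S⁻¹ (tW) S⁻¹) · S` (with `S` the positive-definite
square root of `Σ ∈ SPD(n)` and `W ∈ Sym(n)`) stays in `SPD(n)` (in particular it is
invertible), is twice differentiable entrywise with `γ(0) = Σ`, `γ'(0) = W`, and satisfies the
geodesic equation `γ''(t) = γ'(t) γ(t)⁻¹ γ'(t)` of the affine-invariant metric: it is the
affine-invariant geodesic from `Σ` with initial velocity `W`. -/
theorem spd_geodesic (n : ℕ) (hn : 1 ≤ n) (Sg W S : Matrix (Fin n) (Fin n) ℝ)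
    (hSg : Sg.PosDef) (hW : W.IsSymm) (hS : S.PosDef) (hSS : S * S = Sg)
    (γ : ℝ → Matrix (Fin n) (Fin n) ℝ)
    (hγ : ∀ t : ℝ, γ t = S * NormedSpace.exp (S⁻¹ * (t • W) * S⁻¹) * S) :
    (∀ t : ℝ, (γ t).PosDef) ∧ (∀ t : ℝ, IsUnit (γ t)) ∧ γ 0 = Sg ∧
      ∃ γ' γ'' : ℝ → Matrix (Fin n) (Fin n) ℝ,
        (∀ (t : ℝ) (i j : Fin n), HasDerivAt (fun s : ℝ => γ s i j) (γ' t i j) t) ∧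
        (∀ (t : ℝ) (i j : Fin n), HasDerivAt (fun s : ℝ => γ' s i j) (γ'' t i j) t) ∧
        γ' 0 = W ∧
        ∀ t : ℝ, γ'' t = γ' t * (γ t)⁻¹ * γ' t :=
  spd_geodesic_general n Sg W S hW hS hSS γ hγ
end

section
/- Let Σ ∈ SPD(n), W ∈ Sym(n), Λ := Exp_Σ(W) and P := P_1 = Σ^{1/2}·exp((1/2)·Σ^{−1/2} W Σ^{−1/2})·Σ^{−1/2}. Then for all V, V' ∈ Sym(n), the matrices P V Pᵀ and P V' Pᵀ are symmetric and tr(Λ⁻¹ (P V Pᵀ) Λ⁻¹ (P V' Pᵀ)) = tr(Σ⁻¹ V Σ⁻¹ V'). That is, affine-invariant parallel transport V ↦ P V Pᵀ is a linear isometry from (Sym(n), g_Σ) to (Sym(n), g_Λ). -/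
/-!
The transport `X ↦ P X Pᵀ` is a congruence by an invertible matrix, and it carries `Σ = S²` to
`Λ`: `P S² Pᵀ = S exp(½ A)² S = S exp(A) S` because `exp(½ A)` is symmetric. The affine-invariant
metric `tr(M⁻¹ V M⁻¹ V')` is unchanged when `M`, `V`, `V'` are replaced by their images under one
congruence `X ↦ G X Gᵀ`: the factors `G` cancel up to a conjugation by `Gᵀ`, which the trace
does not see.
-/

open Matrix

namespace Matrix

section CommRing

variable {ι R : Type*} [Fintype ι] [CommRing R]

theorem IsSymm.mul_mul_transpose {V : Matrix ι ι R} (hV : V.IsSymm) (G : Matrix ι ι R) :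
    (G * V * Gᵀ).IsSymm := by
  rw [IsSymm, transpose_mul, transpose_mul, transpose_transpose, hV.eq, Matrix.mul_assoc]

variable [DecidableEq ι]

theorem inv_congruence_mul_congruence {G : Matrix ι ι R} (hG : IsUnit G) (M V : Matrix ι ι R) :
    (G * M * Gᵀ)⁻¹ * (G * V * Gᵀ) = Gᵀ⁻¹ * (M⁻¹ * V) * Gᵀ := by
  rw [mul_inv_rev, mul_inv_rev]
  simp only [Matrix.mul_assoc, nonsing_inv_mul_cancel_left _ _ ((isUnit_iff_isUnit_det G).mp hG)]

theorem trace_inv_mul_inv_mul_congruence {G : Matrix ι ι R} (hG : IsUnit G) (M V V' : Matrix ι ι R) :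
    ((G * M * Gᵀ)⁻¹ * (G * V * Gᵀ) * (G * M * Gᵀ)⁻¹ * (G * V' * Gᵀ)).trace =
      (M⁻¹ * V * M⁻¹ * V').trace := by
  have hGt : IsUnit Gᵀ := (isUnit_transpose G).mpr hG
  calc ((G * M * Gᵀ)⁻¹ * (G * V * Gᵀ) * (G * M * Gᵀ)⁻¹ * (G * V' * Gᵀ)).trace
      = (Gᵀ⁻¹ * (M⁻¹ * V) * Gᵀ * (Gᵀ⁻¹ * (M⁻¹ * V') * Gᵀ)).trace := by
        rw [Matrix.mul_assoc _ (G * M * Gᵀ)⁻¹, inv_congruence_mul_congruence hG, inv_congruence_mul_congruence hG]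
    _ = (Gᵀ⁻¹ * (M⁻¹ * V * M⁻¹ * V') * Gᵀ).trace := by
        simp only [Matrix.mul_assoc,
          mul_nonsing_inv_cancel_left _ _ ((isUnit_iff_isUnit_det _).mp hGt)]
    _ = (M⁻¹ * V * M⁻¹ * V').trace := trace_conj' hGt _

end CommRing

section Real

variable {ι : Type*} [Fintype ι] [DecidableEq ι]

theorem exp_half_smul_mul_self (A : Matrix ι ι ℝ) :
    NormedSpace.exp ((1 / 2 : ℝ) • A) * NormedSpace.exp ((1 / 2 : ℝ) • A) = NormedSpace.exp A := by
  rw [← exp_add_of_commute _ _ (Commute.refl _), ← add_smul]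
  norm_num

theorem transport_mul_self_eq_mul_exp_mul {S A : Matrix ι ι ℝ} (hS : S.IsSymm) (hSu : IsUnit S)
    (hA : A.IsSymm) :
    S * NormedSpace.exp ((1 / 2 : ℝ) • A) * S⁻¹ * (S * S) *
        (S * NormedSpace.exp ((1 / 2 : ℝ) • A) * S⁻¹)ᵀ = S * NormedSpace.exp A * S := by
  have hSdet : IsUnit S.det := (isUnit_iff_isUnit_det S).mp hSu
  rw [transpose_mul, transpose_mul, hS.inv.eq, hS.eq, ((hA.smul _).exp).eq,
    ← exp_half_smul_mul_self A]
  simp only [Matrix.mul_assoc, nonsing_inv_mul_cancel_left _ _ hSdet,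
    mul_nonsing_inv_cancel_left _ _ hSdet]

end Real

end Matrix

theorem spd_transport_isometry_general (n : ℕ) (Sg W S : Matrix (Fin n) (Fin n) ℝ)
    (hW : W.IsSymm) (hS : S.PosDef) (hSS : S * S = Sg)
    (Lm P : Matrix (Fin n) (Fin n) ℝ)
    (hLm : Lm = S * NormedSpace.exp (S⁻¹ * W * S⁻¹) * S)
    (hP : P = S * NormedSpace.exp ((1 / 2 : ℝ) • (S⁻¹ * W * S⁻¹)) * S⁻¹) :
    ∀ V V' : Matrix (Fin n) (Fin n) ℝ, V.IsSymm → V'.IsSymm →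
      (P * V * Pᵀ).IsSymm ∧ (P * V' * Pᵀ).IsSymm ∧
        (Lm⁻¹ * (P * V * Pᵀ) * Lm⁻¹ * (P * V' * Pᵀ)).trace =
          (Sg⁻¹ * V * Sg⁻¹ * V').trace := by
  intro V V' hV hV'
  have hSsymm : S.IsSymm := isHermitian_iff_isSymm.mp hS.isHermitian
  have hA : (S⁻¹ * W * S⁻¹).IsSymm := by
    simpa only [hSsymm.inv.eq] using hW.mul_mul_transpose S⁻¹
  have hPu : IsUnit P := by
    rw [hP]
    exact (hS.isUnit.mul (isUnit_exp _)).mul (isUnit_nonsing_inv_iff.mpr hS.isUnit)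
  have hLm_eq : Lm = P * Sg * Pᵀ := by
    rw [hLm, hP, ← hSS, transport_mul_self_eq_mul_exp_mul hSsymm hS.isUnit hA]
  refine ⟨hV.mul_mul_transpose P, hV'.mul_mul_transpose P, ?_⟩
  rw [hLm_eq, trace_inv_mul_inv_mul_congruence hPu]

/-- With `Λ = Exp_Σ(W)` and `P = P_1 = Σ^{1/2} exp(½ Σ^{−1/2} W Σ^{−1/2}) Σ^{−1/2}`,
affine-invariant parallel transport `V ↦ P V Pᵀ` maps symmetric matrices to symmetric
matrices and is a linear isometry from `(Sym(n), g_Σ)` to `(Sym(n), g_Λ)`: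
`tr(Λ⁻¹ (P V Pᵀ) Λ⁻¹ (P V' Pᵀ)) = tr(Σ⁻¹ V Σ⁻¹ V')`. -/
theorem spd_transport_isometry (n : ℕ) (hn : 1 ≤ n) (Sg W S : Matrix (Fin n) (Fin n) ℝ)
    (hSg : Sg.PosDef) (hW : W.IsSymm) (hS : S.PosDef) (hSS : S * S = Sg)
    (Lm P : Matrix (Fin n) (Fin n) ℝ)
    (hLm : Lm = S * NormedSpace.exp (S⁻¹ * W * S⁻¹) * S)
    (hP : P = S * NormedSpace.exp ((1 / 2 : ℝ) • (S⁻¹ * W * S⁻¹)) * S⁻¹) :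
    ∀ V V' : Matrix (Fin n) (Fin n) ℝ, V.IsSymm → V'.IsSymm →
      (P * V * Pᵀ).IsSymm ∧ (P * V' * Pᵀ).IsSymm ∧
        (Lm⁻¹ * (P * V * Pᵀ) * Lm⁻¹ * (P * V' * Pᵀ)).trace =
          (Sg⁻¹ * V * Sg⁻¹ * V').trace :=
  spd_transport_isometry_general n Sg W S hW hS hSS Lm P hLm hP
end

section
/- Let Σ ∈ SPD(n), W, V ∈ Sym(n), γ(t) := Exp_Σ(tW) and X(t) := P_t V P_tᵀ. Then X(0) = V, X(t) ∈ Sym(n) for all t, X is differentiable (entrywise), and X'(t) = ½·(γ'(t)·γ(t)⁻¹·X(t) + X(t)·γ(t)⁻¹·γ'(t)) for all t ∈ ℝ. This is the parallel-transport equation of the affine-invariant connection along γ, so t ↦ P_t V P_tᵀ is the parallel vector field along the affine-invariant geodesic γ with initial value V. -/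
/-!
With `A = S⁻¹ W S⁻¹` the geodesic is `γ t = S exp(tA) S`, and conjugating the exponential gives
`P t = exp((t/2) B)` with `B = S A S⁻¹`. Hence `P' = ½ B P`, so `X = P V Pᵀ` satisfies
`X' = ½ (B X + X Bᵀ)`. On the other hand `γ' γ⁻¹ = S A S⁻¹ = B` and `γ⁻¹ γ' = S⁻¹ A S = Bᵀ`,
the latter because `S` and `A` are symmetric.
-/

open Matrix

attribute [local instance] Matrix.linftyOpNormedRing Matrix.linftyOpNormedAlgebra

namespace Matrix

variable {m : Type*} [Fintype m]

theorem IsSymm.mul_mul_transpose_s11 {α : Type*} [CommSemiring α] {V : Matrix m m α} (hV : V.IsSymm)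
    (P : Matrix m m α) :
    (P * V * Pᵀ).IsSymm := by
  simp only [IsSymm, transpose_mul, transpose_transpose, hV.eq, Matrix.mul_assoc]

variable [DecidableEq m]

theorem hasDerivAt_apply {f : ℝ → Matrix m m ℝ} {f' : Matrix m m ℝ} {t : ℝ}
    (h : HasDerivAt f f' t) (i j : m) : HasDerivAt (fun s => f s i j) (f' i j) t :=
  (entryLinearMap ℝ ℝ i j).toContinuousLinearMap.hasFDerivAt.comp_hasDerivAt t h

theorem _root_.HasDerivAt.matrix_transpose {f : ℝ → Matrix m m ℝ} {f' : Matrix m m ℝ} {t : ℝ}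
    (h : HasDerivAt f f' t) : HasDerivAt (fun s => (f s)ᵀ) f'ᵀ t :=
  (transposeLinearEquiv m m ℝ ℝ).toLinearMap.toContinuousLinearMap.hasFDerivAt.comp_hasDerivAt t h

theorem hasDerivAt_mul_exp_smul_mul (M A N : Matrix m m ℝ) (t : ℝ) :
    HasDerivAt (fun s : ℝ => M * NormedSpace.exp (s • A) * N)
      (M * (A * NormedSpace.exp (t • A)) * N) t :=
  ((hasDerivAt_exp_smul_const' A t).const_mul M).mul_const N

variable {M N : Matrix m m ℝ}

theorem mul_mul_exp_smul_mul_mul_inv (hN : IsUnit N) (A : Matrix m m ℝ) (t : ℝ) :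
    M * (A * NormedSpace.exp (t • A)) * N * (M * NormedSpace.exp (t • A) * N)⁻¹ =
      M * A * M⁻¹ := by
  have hE := (isUnit_iff_isUnit_det _).mp (isUnit_exp (t • A))
  rw [isUnit_iff_isUnit_det] at hN
  simp only [mul_inv_rev, Matrix.mul_assoc, mul_nonsing_inv_cancel_left _ _ hN,
    mul_nonsing_inv_cancel_left _ _ hE]

theorem inv_mul_exp_smul_mul_mul (hM : IsUnit M) (A : Matrix m m ℝ) (t : ℝ) :
    (M * NormedSpace.exp (t • A) * N)⁻¹ * (M * (A * NormedSpace.exp (t • A)) * N) =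
      N⁻¹ * A * N := by
  have hE := (isUnit_iff_isUnit_det _).mp (isUnit_exp (t • A))
  have hAE : A * NormedSpace.exp (t • A) = NormedSpace.exp (t • A) * A :=
    ((Commute.refl A).smul_right t).exp_right.eq
  rw [isUnit_iff_isUnit_det] at hM
  simp only [mul_inv_rev, Matrix.mul_assoc, nonsing_inv_mul_cancel_left _ _ hM]
  rw [← Matrix.mul_assoc A, hAE, Matrix.mul_assoc, nonsing_inv_mul_cancel_left _ _ hE]

theorem transpose_mul_mul_inv {α : Type*} [CommRing α] {S A : Matrix m m α} (hS : S.IsSymm)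
    (hA : A.IsSymm) :
    (S * A * S⁻¹)ᵀ = S⁻¹ * A * S := by
  rw [transpose_mul, transpose_mul, transpose_nonsing_inv, hS.eq, hA.eq, Matrix.mul_assoc]

theorem hasDerivAt_mul_mul_transpose {P : ℝ → Matrix m m ℝ} {B : Matrix m m ℝ} (V : Matrix m m ℝ)
    {t : ℝ} (hP : HasDerivAt P (B * P t) t) :
    HasDerivAt (fun s => P s * V * (P s)ᵀ) (B * (P t * V * (P t)ᵀ) + P t * V * (P t)ᵀ * Bᵀ) t :=
  ((hP.mul_const V).mul hP.matrix_transpose).congr_deriv <| by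
    simp only [transpose_mul, Matrix.mul_assoc]

end Matrix

theorem spd_parallel_field_general (n : ℕ) (W V S : Matrix (Fin n) (Fin n) ℝ)
    (hW : W.IsSymm) (hV : V.IsSymm) (hS : S.PosDef)
    (γ : ℝ → Matrix (Fin n) (Fin n) ℝ)
    (hγ : ∀ t : ℝ, γ t = S * NormedSpace.exp (S⁻¹ * (t • W) * S⁻¹) * S)
    (P : ℝ → Matrix (Fin n) (Fin n) ℝ)
    (hP : ∀ t : ℝ, P t = S * NormedSpace.exp ((t / 2) • (S⁻¹ * W * S⁻¹)) * S⁻¹)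
    (X : ℝ → Matrix (Fin n) (Fin n) ℝ)
    (hX : ∀ t : ℝ, X t = P t * V * (P t)ᵀ) :
    X 0 = V ∧ (∀ t : ℝ, (X t).IsSymm) ∧
      ∃ γ' X' : ℝ → Matrix (Fin n) (Fin n) ℝ,
        (∀ (t : ℝ) (i j : Fin n), HasDerivAt (fun s : ℝ => γ s i j) (γ' t i j) t) ∧
        (∀ (t : ℝ) (i j : Fin n), HasDerivAt (fun s : ℝ => X s i j) (X' t i j) t) ∧
        ∀ t : ℝ, X' t =
          (1 / 2 : ℝ) • (γ' t * (γ t)⁻¹ * X t + X t * (γ t)⁻¹ * γ' t) := by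
  have hSu : IsUnit S := hS.isUnit
  have hSs : S.IsSymm := isHermitian_iff_isSymm.mp hS.isHermitian
  set A := S⁻¹ * W * S⁻¹
  have hAs : A.IsSymm := by simpa only [hSs.inv.eq] using hW.mul_mul_transpose_s11 S⁻¹
  set B := S * A * S⁻¹ with hB
  obtain rfl : γ = fun s => S * NormedSpace.exp (s • A) * S := by
    funext s; rw [hγ, Matrix.mul_smul, Matrix.smul_mul]
  have hPd : ∀ t, HasDerivAt P (((1 / 2 : ℝ) • B) * P t) t := by
    obtain rfl : P = fun s => NormedSpace.exp (s • ((1 / 2 : ℝ) • B)) := by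
      funext s
      rw [hP, ← exp_conj _ _ hSu, Matrix.mul_smul, Matrix.smul_mul, smul_smul, div_eq_mul_one_div]
    exact fun t => hasDerivAt_exp_smul_const' _ t
  obtain rfl : X = fun s => P s * V * (P s)ᵀ := funext hX
  refine ⟨?_, fun t => hV.mul_mul_transpose_s11 (P t),
    fun t => S * (A * NormedSpace.exp (t • A)) * S,
    fun t => (1 / 2 : ℝ) • B * (P t * V * (P t)ᵀ) + P t * V * (P t)ᵀ * ((1 / 2 : ℝ) • B)ᵀ,
    fun t => hasDerivAt_apply (hasDerivAt_mul_exp_smul_mul S A S t),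
    fun t => hasDerivAt_apply (hasDerivAt_mul_mul_transpose V (hPd t)), fun t => ?_⟩
  · have hP0 : P 0 = 1 := by
      rw [hP, zero_div, zero_smul, NormedSpace.exp_zero, Matrix.mul_one,
        mul_nonsing_inv _ ((isUnit_iff_isUnit_det S).mp hSu)]
    simp [hP0]
  · beta_reduce
    rw [Matrix.mul_assoc (P t * V * (P t)ᵀ), mul_mul_exp_smul_mul_mul_inv hSu, ← hB,
      inv_mul_exp_smul_mul_mul hSu, transpose_smul, transpose_mul_mul_inv hSs hAs]
    simp only [smul_add, Matrix.smul_mul, Matrix.mul_smul]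

/-- Along the affine-invariant geodesic `γ(t) = Exp_Σ(tW)`, the field
`X(t) = P_t V P_tᵀ` (with `P_t = Σ^{1/2} exp((t/2) Σ^{−1/2} W Σ^{−1/2}) Σ^{−1/2}`) starts at
`V`, is symmetric for all `t`, differentiable entrywise, and satisfies the parallel-transport
equation `X'(t) = ½ (γ'(t) γ(t)⁻¹ X(t) + X(t) γ(t)⁻¹ γ'(t))` of the affine-invariant
connection: it is the parallel vector field along `γ` with initial value `V`. -/
theorem spd_parallel_field (n : ℕ) (hn : 1 ≤ n) (Sg W V S : Matrix (Fin n) (Fin n) ℝ)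
    (hSg : Sg.PosDef) (hW : W.IsSymm) (hV : V.IsSymm) (hS : S.PosDef) (hSS : S * S = Sg)
    (γ : ℝ → Matrix (Fin n) (Fin n) ℝ)
    (hγ : ∀ t : ℝ, γ t = S * NormedSpace.exp (S⁻¹ * (t • W) * S⁻¹) * S)
    (P : ℝ → Matrix (Fin n) (Fin n) ℝ)
    (hP : ∀ t : ℝ, P t = S * NormedSpace.exp ((t / 2) • (S⁻¹ * W * S⁻¹)) * S⁻¹)
    (X : ℝ → Matrix (Fin n) (Fin n) ℝ)
    (hX : ∀ t : ℝ, X t = P t * V * (P t)ᵀ) :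
    X 0 = V ∧ (∀ t : ℝ, (X t).IsSymm) ∧
      ∃ γ' X' : ℝ → Matrix (Fin n) (Fin n) ℝ,
        (∀ (t : ℝ) (i j : Fin n), HasDerivAt (fun s : ℝ => γ s i j) (γ' t i j) t) ∧
        (∀ (t : ℝ) (i j : Fin n), HasDerivAt (fun s : ℝ => X s i j) (X' t i j) t) ∧
        ∀ t : ℝ, X' t =
          (1 / 2 : ℝ) • (γ' t * (γ t)⁻¹ * X t + X t * (γ t)⁻¹ * γ' t) :=
  spd_parallel_field_general n W V S hW hV hS γ hγ P hP X hX
end
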